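/- Let A > 2 and consider a four-body kite configuration q_1 = (−x_2, 0), q_2 = (x_2, 0), q_3 = (0, y_3), q_4 = (0, y_4) with x_2 > 0, y_3 > y_4, distinct points, and positive masses m_1 = m_2, m_3, m_4. Let H be the Hessian of f = M I/2 + U/(A−2) at this configuration. Then in the orthogonal-type basis ṽ_{a,3} = (ṽ_{1,3} + ṽ_{2,3})/√2, ṽ_{a,4} = (ṽ_{1,4} + ṽ_{2,4})/√2, ṽ_{3,4}, ṽ_{s,3} = (ṽ_{1,3} − ṽ_{2,3})/√2, ṽ_{s,4} = (ṽ_{1,4} − ṽ_{2,4})/√2 of rescaled twist vectors, the matrix of H is block-diagonal: every entry pairing one of {ṽ_{a,3}, ṽ_{a,4}, ṽ_{3,4}} with one of {ṽ_{s,3}, ṽ_{s,4}} vanishes, so H decomposes into a 3×3 block H_a and a 2×2 block H_s. -/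

import Mathlib

noncomputable section

open Finset

/-- A point in the Euclidean plane with the given coordinates. -/
def pt (a b : ℝ) : EuclideanSpace ℝ (Fin 2) := (WithLp.equiv 2 (Fin 2 → ℝ)).symm ![a, b]

/-- The configuration space of `n` planar points, identified with `ℝ^{2n}`. -/
abbrev Conf (n : ℕ) := Fin n → EuclideanSpace ℝ (Fin 2)

/-- The twist vector `v_{i,j}`: its only nonzero components are
`(v_{i,j})_{x_i} = m_j (y_i - y_j)`, `(v_{i,j})_{y_i} = -m_j (x_i - x_j)`,
`(v_{i,j})_{x_j} = -m_i (y_i - y_j)`, `(v_{i,j})_{y_j} = m_i (x_i - x_j)`. -/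
def twist {n : ℕ} (m : Fin n → ℝ) (q : Conf n) (i j : Fin n) : Conf n :=
  fun k =>
    if k = i then pt (m j * (q i 1 - q j 1)) (-(m j * (q i 0 - q j 0)))
    else if k = j then pt (-(m i * (q i 1 - q j 1))) (m i * (q i 0 - q j 0))
    else 0

/-- The dot product on the configuration space `ℝ^{2n}`. -/
def dot {n : ℕ} (v w : Conf n) : ℝ := ∑ k, ∑ t, v k t * w k t

/-- Twice the signed area `Λ_{i,j,k}` of the triangle `q_i q_j q_k`. -/
def lam {n : ℕ} (q : Conf n) (i j k : Fin n) : ℝ :=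
  (q i 0 - q j 0) * (q i 1 - q k 1) - (q i 0 - q k 0) * (q i 1 - q j 1)

/-- The moment of inertia about the center of mass. -/
def Ifun {n : ℕ} (m : Fin n → ℝ) (q : Conf n) : ℝ :=
  ∑ i, m i * ‖q i - (∑ i, m i)⁻¹ • ∑ j, m j • q j‖ ^ 2

/-- The homogeneous potential `U = ∑_{i<j} m_i m_j r_{i,j}^{2-A}`. -/
def Ufun {n : ℕ} (A : ℝ) (m : Fin n → ℝ) (q : Conf n) : ℝ :=
  ∑ p ∈ Finset.univ.filter (fun p : Fin n × Fin n => p.1 < p.2),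
    m p.1 * m p.2 * ‖q p.1 - q p.2‖ ^ (2 - A)

/-- `f = M I / 2 + U / (A - 2)`. -/
def fFun {n : ℕ} (A : ℝ) (m : Fin n → ℝ) (q : Conf n) : ℝ :=
  (∑ i, m i) * Ifun m q / 2 + Ufun A m q / (A - 2)

/-- The Hessian of `f` at `q`, as a bilinear form: `v ᵀ H w`. -/
def hess {n : ℕ} (A : ℝ) (m : Fin n → ℝ) (q : Conf n) (v w : Conf n) : ℝ :=
  fderiv ℝ (fderiv ℝ (fFun A m)) q v w

/-! The reflection `(x, y) ↦ (-x, y)` combined with the swap `σ` of bodies 1 and 2 is an isometry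
of configuration space that preserves the masses (as `m₁ = m₂`), so it preserves `f`; it also fixes
the kite, so the Hessian of `f` at the kite is invariant under it. Being orientation-reversing,
it sends each rescaled twist `ṽ_{i,j}` to `-ṽ_{σ i,σ j}`. Hence `ṽ_{a,3}`, `ṽ_{a,4}`, `ṽ_{3,4}` are
anti-invariant and `ṽ_{s,3}`, `ṽ_{s,4}` invariant, and an invariant bilinear form pairs an
anti-invariant vector with an invariant one to zero. -/

section SecondDerivative

variable {𝕜 E F : Type*} [NontriviallyNormedField 𝕜] [NormedAddCommGroup E] [NormedSpace 𝕜 E]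
  [NormedAddCommGroup F] [NormedSpace 𝕜 F]

theorem fderiv_fderiv_apply_map_of_comp_eq {f : E → F} {L : E ≃L[𝕜] E} (hf : f ∘ L = f)
    {x : E} (hx : L x = x) (v w : E) :
    fderiv 𝕜 (fderiv 𝕜 f) x (L v) (L w) = fderiv 𝕜 (fderiv 𝕜 f) x v w := by
  set τ : (E →L[𝕜] F) ≃L[𝕜] (E →L[𝕜] F) := L.symm.arrowCongr (.refl 𝕜 F)
  have hDf : fderiv 𝕜 f = τ ∘ fderiv 𝕜 f ∘ L := by
    funext y
    ext u
    conv_lhs => rw [← hf, L.comp_right_fderiv]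
    simp [τ]
  conv_rhs => rw [hDf, τ.comp_fderiv, L.comp_right_fderiv, hx]
  simp [τ]

theorem fderiv_fderiv_apply_eq_zero_of_map_eq_neg [CharZero 𝕜] {f : E → F} {L : E ≃L[𝕜] E}
    (hf : f ∘ L = f) {x : E} (hx : L x = x) {v w : E} (hv : L v = -v) (hw : L w = w) :
    fderiv 𝕜 (fderiv 𝕜 f) x v w = 0 ∧ fderiv 𝕜 (fderiv 𝕜 f) x w v = 0 := by
  have hvw := fderiv_fderiv_apply_map_of_comp_eq hf hx v w
  have hwv := fderiv_fderiv_apply_map_of_comp_eq hf hx w v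
  rw [hv, hw, map_neg, neg_apply, neg_eq_iff_add_eq_zero, ← two_smul 𝕜] at hvw
  rw [hv, hw, map_neg, neg_eq_iff_add_eq_zero, ← two_smul 𝕜] at hwv
  exact ⟨(smul_eq_zero.mp hvw).resolve_left two_ne_zero,
    (smul_eq_zero.mp hwv).resolve_left two_ne_zero⟩

end SecondDerivative

theorem two_nsmul_sum_lt_eq_sum_ne {ι M : Type*} [Fintype ι] [LinearOrder ι] [AddCommMonoid M]
    (g : ι → ι → M) (hg : ∀ i j, g i j = g j i) :
    2 • ∑ p ∈ univ.filter (fun p : ι × ι => p.1 < p.2), g p.1 p.2 =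
      ∑ p ∈ univ.filter (fun p : ι × ι => p.1 ≠ p.2), g p.1 p.2 := by
  have hswap : ∑ p ∈ univ.filter (fun p : ι × ι => p.2 < p.1), g p.1 p.2 =
      ∑ p ∈ univ.filter (fun p : ι × ι => p.1 < p.2), g p.1 p.2 :=
    Finset.sum_equiv (Equiv.prodComm ι ι) (by simp) (fun p _ => hg _ _)
  rw [two_nsmul]
  nth_rewrite 2 [← hswap]
  rw [← Finset.sum_union (Finset.disjoint_filter.2 fun p _ h => h.asymm)]
  congr 1
  ext p
  simp [lt_or_lt_iff_ne]

def relabelIsometry {n : ℕ} (e : Equiv.Perm (Fin n))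
    (ρ : EuclideanSpace ℝ (Fin 2) ≃ₗᵢ[ℝ] EuclideanSpace ℝ (Fin 2)) : Conf n ≃L[ℝ] Conf n :=
  ((LinearEquiv.piCongrRight fun _ => ρ.toLinearEquiv).trans
    (LinearEquiv.funCongrLeft ℝ _ e)).toContinuousLinearEquiv

section Invariance

variable {n : ℕ} {m : Fin n → ℝ} {e : Equiv.Perm (Fin n)}
  {ρ : EuclideanSpace ℝ (Fin 2) ≃ₗᵢ[ℝ] EuclideanSpace ℝ (Fin 2)}

@[simp]
theorem relabelIsometry_apply (p : Conf n) (k : Fin n) :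
    relabelIsometry e ρ p k = ρ (p (e k)) := rfl

theorem Ifun_relabelIsometry (hm : ∀ k, m (e k) = m k) (p : Conf n) :
    Ifun m (relabelIsometry e ρ p) = Ifun m p := by
  have hcenter : ∑ j, m j • relabelIsometry e ρ p j = ρ (∑ j, m j • p j) := by
    rw [map_sum, ← Equiv.sum_comp e (fun j => ρ (m j • p j))]
    simp [hm]
  unfold Ifun
  rw [hcenter]
  refine (Finset.sum_congr rfl fun i _ => ?_).trans
    (Equiv.sum_comp e fun i => m i * ‖p i - (∑ i, m i)⁻¹ • ∑ j, m j • p j‖ ^ 2)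
  rw [relabelIsometry_apply, hm, ← map_smul, ← map_sub, LinearIsometryEquiv.norm_map]

theorem Ufun_relabelIsometry (A : ℝ) (hm : ∀ k, m (e k) = m k) (p : Conf n) :
    Ufun A m (relabelIsometry e ρ p) = Ufun A m p := by
  set g : Conf n → Fin n → Fin n → ℝ := fun p i j => m i * m j * ‖p i - p j‖ ^ (2 - A)
  have hg : ∀ p i j, g p i j = g p j i := fun p i j => by simp only [g, norm_sub_rev]; ring
  have hrelabel : ∀ i j, g (relabelIsometry e ρ p) i j = g p (e i) (e j) := fun i j => by
    simp only [g, relabelIsometry_apply, ← map_sub, LinearIsometryEquiv.norm_map, hm]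
  have hperm : ∑ q ∈ univ.filter (fun q : Fin n × Fin n => q.1 ≠ q.2), g p (e q.1) (e q.2) =
      ∑ q ∈ univ.filter (fun q : Fin n × Fin n => q.1 ≠ q.2), g p q.1 q.2 :=
    Finset.sum_equiv (e.prodCongr e) (by simp) (fun _ _ => rfl)
  apply nsmul_right_injective two_ne_zero
  change 2 • ∑ q ∈ univ.filter (fun q : Fin n × Fin n => q.1 < q.2),
      g (relabelIsometry e ρ p) q.1 q.2 =
    2 • ∑ q ∈ univ.filter (fun q : Fin n × Fin n => q.1 < q.2), g p q.1 q.2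
  rw [two_nsmul_sum_lt_eq_sum_ne _ (hg _), two_nsmul_sum_lt_eq_sum_ne _ (hg _)]
  simp only [hrelabel]
  exact hperm

theorem fFun_comp_relabelIsometry (A : ℝ) (hm : ∀ k, m (e k) = m k) :
    fFun A m ∘ relabelIsometry e ρ = fFun A m := by
  funext p
  simp only [Function.comp_apply, fFun, Ifun_relabelIsometry hm, Ufun_relabelIsometry A hm]

theorem apply_symm_eq_of_relabelIsometry_eq {q : Conf n} (hq : relabelIsometry e ρ q = q)
    (k : Fin n) : q (e.symm k) = ρ (q k) := by
  simpa using (congrFun hq (e.symm k)).symm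

end Invariance

def yAxisReflection : EuclideanSpace ℝ (Fin 2) ≃ₗᵢ[ℝ] EuclideanSpace ℝ (Fin 2) :=
  (ℝ ∙ EuclideanSpace.single (1 : Fin 2) (1 : ℝ)).reflection

@[simp]
theorem yAxisReflection_apply_zero (v : EuclideanSpace ℝ (Fin 2)) :
    yAxisReflection v 0 = -v 0 := by
  simp [yAxisReflection, Submodule.reflection_singleton_apply]

@[simp]
theorem yAxisReflection_apply_one (v : EuclideanSpace ℝ (Fin 2)) :
    yAxisReflection v 1 = v 1 := by
  simp [yAxisReflection, Submodule.reflection_singleton_apply, EuclideanSpace.inner_single_left]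
  ring

@[simp] theorem pt_apply_zero (a b : ℝ) : pt a b 0 = a := rfl

@[simp] theorem pt_apply_one (a b : ℝ) : pt a b 1 = b := rfl

def rescaledTwist {n : ℕ} (m : Fin n → ℝ) (q : Conf n) (i j : Fin n) : Conf n :=
  (m i * m j * ‖q i - q j‖)⁻¹ • twist m q i j

section Twist

variable {n : ℕ} {m : Fin n → ℝ} {e : Equiv.Perm (Fin n)} {q : Conf n}

theorem rescaledTwist_def (i j : Fin n) :
    rescaledTwist m q i j = (m i * m j * ‖q i - q j‖)⁻¹ • twist m q i j := rfl

theorem relabelIsometry_twist (hm : ∀ k, m (e k) = m k)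
    (hq : relabelIsometry e yAxisReflection q = q) (i j : Fin n) :
    relabelIsometry e yAxisReflection (twist m q i j) = -twist m q (e.symm i) (e.symm j) := by
  have hme : ∀ k, m (e.symm k) = m k := fun k => by simpa using (hm (e.symm k)).symm
  funext k
  ext t
  fin_cases t <;>
  · simp only [relabelIsometry_apply, twist, Pi.neg_apply, ← e.eq_symm_apply]
    split_ifs <;> simp [apply_symm_eq_of_relabelIsometry_eq hq, hme] <;> ring

theorem relabelIsometry_rescaledTwist (hm : ∀ k, m (e k) = m k)
    (hq : relabelIsometry e yAxisReflection q = q) (i j : Fin n) :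
    relabelIsometry e yAxisReflection (rescaledTwist m q i j) =
      -rescaledTwist m q (e.symm i) (e.symm j) := by
  have hme : ∀ k, m (e.symm k) = m k := fun k => by simpa using (hm (e.symm k)).symm
  rw [rescaledTwist, rescaledTwist, map_smul, relabelIsometry_twist hm hq, hme, hme,
    apply_symm_eq_of_relabelIsometry_eq hq, apply_symm_eq_of_relabelIsometry_eq hq, ← map_sub,
    LinearIsometryEquiv.norm_map, smul_neg]

end Twist

theorem kite_hessian_block_diagonal_general (A : ℝ)
    (m : Fin 4 → ℝ) (x₂ y₃ y₄ : ℝ)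
    (q : Conf 4)
    (hq0 : q 0 = pt (-x₂) 0) (hq1 : q 1 = pt x₂ 0)
    (hq2 : q 2 = pt 0 y₃) (hq3 : q 3 = pt 0 y₄)
    (hm01 : m 0 = m 1) :
    ∀ v ∈ ({(Real.sqrt 2)⁻¹ • ((m 0 * m 2 * ‖q 0 - q 2‖)⁻¹ • twist m q 0 2 +
              (m 1 * m 2 * ‖q 1 - q 2‖)⁻¹ • twist m q 1 2),
            (Real.sqrt 2)⁻¹ • ((m 0 * m 3 * ‖q 0 - q 3‖)⁻¹ • twist m q 0 3 +
              (m 1 * m 3 * ‖q 1 - q 3‖)⁻¹ • twist m q 1 3),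
            (m 2 * m 3 * ‖q 2 - q 3‖)⁻¹ • twist m q 2 3} : Set (Conf 4)),
    ∀ w ∈ ({(Real.sqrt 2)⁻¹ • ((m 0 * m 2 * ‖q 0 - q 2‖)⁻¹ • twist m q 0 2 -
              (m 1 * m 2 * ‖q 1 - q 2‖)⁻¹ • twist m q 1 2),
            (Real.sqrt 2)⁻¹ • ((m 0 * m 3 * ‖q 0 - q 3‖)⁻¹ • twist m q 0 3 -
              (m 1 * m 3 * ‖q 1 - q 3‖)⁻¹ • twist m q 1 3)} : Set (Conf 4)),
    hess A m q v w = 0 ∧ hess A m q w v = 0 := by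
  set e : Equiv.Perm (Fin 4) := Equiv.swap 0 1
  have he : e 0 = 1 ∧ e 1 = 0 ∧ e 2 = 2 ∧ e 3 = 3 := by decide
  have hm : ∀ k, m (e k) = m k := by
    intro k
    fin_cases k <;> simp [he, hm01]
  have hq : relabelIsometry e yAxisReflection q = q := by
    funext k
    ext t
    fin_cases k <;> fin_cases t <;> simp [he, hq0, hq1, hq2, hq3]
  have hv : ∀ i j, relabelIsometry e yAxisReflection (rescaledTwist m q i j) =
      -rescaledTwist m q (e i) (e j) := by
    simpa only [e, Equiv.symm_swap] using relabelIsometry_rescaledTwist hm hq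
  rintro v (rfl | rfl | rfl) w (rfl | rfl) <;>
    refine fderiv_fderiv_apply_eq_zero_of_map_eq_neg (fFun_comp_relabelIsometry A hm) hq ?_ ?_ <;>
    simp only [← rescaledTwist_def, map_smul, map_add, map_sub, hv, he] <;> module

/-- For a kite configuration with `m₁ = m₂`, in the basis of rescaled twist vectors
`ṽ_{a,3} = (ṽ₁₃ + ṽ₂₃)/√2`, `ṽ_{a,4} = (ṽ₁₄ + ṽ₂₄)/√2`, `ṽ₃₄`,
`ṽ_{s,3} = (ṽ₁₃ - ṽ₂₃)/√2`, `ṽ_{s,4} = (ṽ₁₄ - ṽ₂₄)/√2`, the Hessian of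
`f = M I/2 + U/(A-2)` is block diagonal: every entry pairing a symmetric-block vector
with an antisymmetric-block vector vanishes. -/
theorem kite_hessian_block_diagonal (A : ℝ) (hA : 2 < A)
    (m : Fin 4 → ℝ) (hm : ∀ i, 0 < m i) (x₂ y₃ y₄ : ℝ)
    (hx : 0 < x₂) (hy : y₄ < y₃) (q : Conf 4)
    (hq0 : q 0 = pt (-x₂) 0) (hq1 : q 1 = pt x₂ 0)
    (hq2 : q 2 = pt 0 y₃) (hq3 : q 3 = pt 0 y₄)
    (hq : Function.Injective q)
    (hm01 : m 0 = m 1) :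
    ∀ v ∈ ({(Real.sqrt 2)⁻¹ • ((m 0 * m 2 * ‖q 0 - q 2‖)⁻¹ • twist m q 0 2 +
              (m 1 * m 2 * ‖q 1 - q 2‖)⁻¹ • twist m q 1 2),
            (Real.sqrt 2)⁻¹ • ((m 0 * m 3 * ‖q 0 - q 3‖)⁻¹ • twist m q 0 3 +
              (m 1 * m 3 * ‖q 1 - q 3‖)⁻¹ • twist m q 1 3),
            (m 2 * m 3 * ‖q 2 - q 3‖)⁻¹ • twist m q 2 3} : Set (Conf 4)),
    ∀ w ∈ ({(Real.sqrt 2)⁻¹ • ((m 0 * m 2 * ‖q 0 - q 2‖)⁻¹ • twist m q 0 2 -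
              (m 1 * m 2 * ‖q 1 - q 2‖)⁻¹ • twist m q 1 2),
            (Real.sqrt 2)⁻¹ • ((m 0 * m 3 * ‖q 0 - q 3‖)⁻¹ • twist m q 0 3 -
              (m 1 * m 3 * ‖q 1 - q 3‖)⁻¹ • twist m q 1 3)} : Set (Conf 4)),
    hess A m q v w = 0 ∧ hess A m q w v = 0 :=
  kite_hessian_block_diagonal_general A m x₂ y₃ y₄ q hq0 hq1 hq2 hq3 hm01
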